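/- arXiv:2511.22738 — 4 statements merged into one kernel-verified Lean document; each statement's English description precedes it below -/
import Mathlib

section
/- Let M be a topological space, let f, g, h be flows on M, and let λ > 0. Assume (i) h_u ∘ g_t = g_t ∘ h_{u·e^{−λt}} for all u, t ∈ ℝ; (ii) for every y ∈ M the map u ↦ h_u(y) is injective. Let φ : M → M and let τ : M × [0,∞) → ℝ satisfy g_{−T}(φ(f_T(x))) = h_{τ(x,T)}(φ(x)) for all x ∈ M and T ≥ 0. Then for all x ∈ M and all T₁, T₂ ≥ 0, τ(x, T₁+T₂) = τ(x, T₁) + e^{−λT₁}·τ(f_{T₁}(x), T₂). -/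
/-- The cocycle identity for `τ` derived from
`g_{-T} ∘ φ ∘ f_T = h_{τ(·,T)} ∘ φ`, using the commutation relation
`h_u ∘ g_t = g_t ∘ h_{u·e^{-λt}}` and injectivity of `u ↦ h_u y`. -/
theorem stmt0 {M : Type*} [TopologicalSpace M]
    (f g h : Flow ℝ M) (lam : ℝ) (hlam : 0 < lam)
    (hcomm : ∀ (u t : ℝ) (x : M), h u (g t x) = g t (h (u * Real.exp (-lam * t)) x))
    (hinj : ∀ y : M, Function.Injective fun u : ℝ => h u y)
    (φ : M → M) (τ : M → ℝ → ℝ)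
    (hτ : ∀ (x : M) (T : ℝ), 0 ≤ T → g (-T) (φ (f T x)) = h (τ x T) (φ x)) :
    ∀ (x : M) (T₁ T₂ : ℝ), 0 ≤ T₁ → 0 ≤ T₂ →
      τ x (T₁ + T₂) = τ x T₁ + Real.exp (-lam * T₁) * τ (f T₁ x) T₂ := by
  intro x T₁ T₂ h1 h2
  apply hinj (φ x)
  have key : g (-(T₁ + T₂)) (φ (f (T₁ + T₂) x))
      = h (τ x T₁ + Real.exp (-lam * T₁) * τ (f T₁ x) T₂) (φ x) := by
    have e1 : f (T₁ + T₂) x = f T₂ (f T₁ x) := by rw [add_comm]; exact f.map_add _ _ _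
    have e2 : (-(T₁ + T₂) : ℝ) = -T₁ + -T₂ := by ring
    rw [e1, e2, g.map_add, hτ _ _ h2]
    have := hcomm (τ (f T₁ x) T₂ * Real.exp (-lam * T₁)) (-T₁) (φ (f T₁ x))
    rw [show -lam * -T₁ = -(-lam * T₁) by ring] at this
    rw [mul_assoc, ← Real.exp_add, add_neg_cancel, Real.exp_zero, mul_one] at this
    rw [← this, hτ _ _ h1, ← Flow.map_add]
    ring_nf
  show h (τ x (T₁ + T₂)) (φ x) = _
  rw [← hτ _ _ (by linarith), key]
end

section
/- Let M be a compact topological space, let f be a flow on M, let λ > 0, and let τ : M × [0,∞) → ℝ be continuous and satisfy the λ-cocycle identity. Set τ₀ = sup{ |τ(x,T)| : x ∈ M, T ∈ [0,1] }. Then for all x ∈ M and all T ≥ T′ ≥ 0, one has |τ(x,T) − τ(x,T′)| ≤ e^{−λ⌊T′⌋}·τ₀ / (1 − e^{−λ}), where ⌊T′⌋ denotes the integer floor of T′. In particular, the family (τ(·,T))_{T ≥ 0} is uniformly Cauchy as T → ∞. -/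
/-- the geometric-series estimate
`|τ(x,T) - τ(x,T')| ≤ e^{-λ⌊T'⌋}·τ₀ / (1 - e^{-λ})` for all `T ≥ T' ≥ 0`,
and the resulting uniform Cauchy property of `τ(·,T)` as `T → ∞`. -/
theorem stmt2 {M : Type*} [TopologicalSpace M] [CompactSpace M]
    (f : Flow ℝ M) (lam : ℝ) (hlam : 0 < lam)
    (τ : M → ℝ → ℝ) (hcont : Continuous fun p : M × ℝ => τ p.1 p.2)
    (hcocycle : ∀ (x : M) (T₁ T₂ : ℝ), 0 ≤ T₁ → 0 ≤ T₂ →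
      τ x (T₁ + T₂) = τ x T₁ + Real.exp (-lam * T₁) * τ (f T₁ x) T₂)
    (τ₀ : ℝ)
    (hτ₀ : τ₀ = sSup {r : ℝ | ∃ x : M, ∃ T ∈ Set.Icc (0 : ℝ) 1, r = |τ x T|}) :
    (∀ (x : M) (T T' : ℝ), 0 ≤ T' → T' ≤ T →
      |τ x T - τ x T'| ≤ Real.exp (-lam * (⌊T'⌋ : ℝ)) * τ₀ / (1 - Real.exp (-lam))) ∧
    (∀ ε > 0, ∃ T₀ : ℝ, 0 ≤ T₀ ∧ ∀ T T' : ℝ, T₀ ≤ T → T₀ ≤ T' →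
      ∀ x : M, |τ x T - τ x T'| < ε) := by
  set r : ℝ := Real.exp (-lam) with hrdef
  have hr0 : 0 < r := Real.exp_pos _
  have hr1 : r < 1 := by
    rw [hrdef, Real.exp_lt_one_iff]; linarith
  have h1r : 0 < 1 - r := by linarith
  -- the sup set is bounded above
  have hset : {s : ℝ | ∃ x : M, ∃ T ∈ Set.Icc (0 : ℝ) 1, s = |τ x T|} =
      (fun p : M × ℝ => |τ p.1 p.2|) '' (Set.univ ×ˢ Set.Icc (0:ℝ) 1) := by
    ext s
    constructor
    · rintro ⟨x, T, hT, rfl⟩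
      exact ⟨(x, T), ⟨trivial, hT⟩, rfl⟩
    · rintro ⟨⟨x, T⟩, ⟨-, hT⟩, rfl⟩
      exact ⟨x, T, hT, rfl⟩
  have hbdd : BddAbove {s : ℝ | ∃ x : M, ∃ T ∈ Set.Icc (0 : ℝ) 1, s = |τ x T|} := by
    rw [hset]
    exact ((isCompact_univ.prod isCompact_Icc).image hcont.abs).bddAbove
  have hub : ∀ (x : M) (T : ℝ), 0 ≤ T → T ≤ 1 → |τ x T| ≤ τ₀ := by
    intro x T h0 h1
    rw [hτ₀]
    exact le_csSup hbdd ⟨x, T, ⟨h0, h1⟩, rfl⟩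
  have hτ₀nn : ∀ _ : M, 0 ≤ τ₀ := fun x =>
    le_trans (abs_nonneg _) (hub x 0 le_rfl zero_le_one)
  -- key uniform bound
  have hbound : ∀ (y : M) (S : ℝ), 0 ≤ S → |τ y S| ≤ τ₀ / (1 - r) := by
    have key : ∀ n : ℕ, ∀ (y : M) (S : ℝ), 0 ≤ S → S ≤ n + 1 → |τ y S| ≤ τ₀ / (1 - r) := by
      intro n
      induction n with
      | zero =>
        intro y S h0 h1
        push_cast at h1
        have h' : |τ y S| ≤ τ₀ := hub y S h0 (by linarith)
        have : τ₀ ≤ τ₀ / (1 - r) := by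
          rw [le_div_iff₀ h1r]
          nlinarith [hτ₀nn y, hr0]
        linarith
      | succ n ih =>
        intro y S h0 h1
        by_cases hS : S ≤ n + 1
        · exact ih y S h0 hS
        · push_neg at hS
          have h1' : (1:ℝ) ≤ S := by
            have : (0:ℝ) ≤ (n:ℝ) := Nat.cast_nonneg n
            linarith
          have hco := hcocycle y 1 (S - 1) zero_le_one (by linarith)
          rw [add_sub_cancel] at hco
          have hrest : |τ (f 1 y) (S - 1)| ≤ τ₀ / (1 - r) := by
            apply ih _ _ (by linarith)
            push_cast at h1 ⊢
            linarith
          have habs : |τ y S| ≤ |τ y 1| + r * |τ (f 1 y) (S - 1)| := by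
            rw [hco]
            calc |τ y 1 + Real.exp (-lam * 1) * τ (f 1 y) (S - 1)|
                ≤ |τ y 1| + |Real.exp (-lam * 1) * τ (f 1 y) (S - 1)| := abs_add_le _ _
              _ = |τ y 1| + r * |τ (f 1 y) (S - 1)| := by
                  rw [abs_mul, abs_of_pos (Real.exp_pos _), mul_one]
          have h1b : |τ y 1| ≤ τ₀ := hub y 1 zero_le_one le_rfl
          have heq : τ₀ + r * (τ₀ / (1 - r)) = τ₀ / (1 - r) := by
            field_simp
            ring
          nlinarith [hr0.le]
    intro y S hS
    exact key ⌈S⌉₊ y S hS (by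
      have := Nat.le_ceil S
      push_cast
      linarith)
  -- main estimate
  have main1 : ∀ (x : M) (T T' : ℝ), 0 ≤ T' → T' ≤ T →
      |τ x T - τ x T'| ≤ Real.exp (-lam * (⌊T'⌋ : ℝ)) * τ₀ / (1 - r) := by
    intro x T T' hT' hTT'
    have hco := hcocycle x T' (T - T') hT' (by linarith)
    rw [add_sub_cancel] at hco
    have hdiff : τ x T - τ x T' = Real.exp (-lam * T') * τ (f T' x) (T - T') := by
      rw [hco]; ring
    rw [hdiff, abs_mul, abs_of_pos (Real.exp_pos _)]
    have hexp : Real.exp (-lam * T') ≤ Real.exp (-lam * (⌊T'⌋ : ℝ)) := by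
      apply Real.exp_le_exp.mpr
      have : (⌊T'⌋ : ℝ) ≤ T' := Int.floor_le T'
      nlinarith
    have hb := hbound (f T' x) (T - T') (by linarith)
    have hBnn : 0 ≤ τ₀ / (1 - r) := div_nonneg (hτ₀nn x) h1r.le
    calc Real.exp (-lam * T') * |τ (f T' x) (T - T')|
        ≤ Real.exp (-lam * T') * (τ₀ / (1 - r)) :=
          mul_le_mul_of_nonneg_left hb (Real.exp_pos _).le
      _ ≤ Real.exp (-lam * (⌊T'⌋ : ℝ)) * (τ₀ / (1 - r)) :=
          mul_le_mul_of_nonneg_right hexp hBnn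
      _ = Real.exp (-lam * (⌊T'⌋ : ℝ)) * τ₀ / (1 - r) := by ring
  refine ⟨main1, ?_⟩
  intro ε hε
  rcases isEmpty_or_nonempty M with hM | hM
  · exact ⟨0, le_rfl, fun T T' _ _ x => isEmptyElim x⟩
  obtain ⟨x₀⟩ := hM
  have hτnn := hτ₀nn x₀
  set B : ℝ := τ₀ / (1 - r) with hBdef
  have hBnn : 0 ≤ B := div_nonneg hτnn h1r.le
  obtain ⟨n, hn⟩ : ∃ n : ℕ, r ^ n * B < ε := by
    rcases eq_or_lt_of_le hBnn with hB0 | hBpos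
    · exact ⟨0, by rw [← hB0]; simpa using hε⟩
    · obtain ⟨n, hn⟩ := exists_pow_lt_of_lt_one (div_pos hε hBpos) hr1
      exact ⟨n, (lt_div_iff₀ hBpos).mp hn⟩
  have hmain : ∀ T T' : ℝ, (n:ℝ) ≤ T' → T' ≤ T → ∀ x : M, |τ x T - τ x T'| < ε := by
    intro T T' hT' hTT' x
    have h0T' : 0 ≤ T' := le_trans (Nat.cast_nonneg n) hT'
    have h1 := main1 x T T' h0T' hTT'
    have hfloor : (n : ℝ) ≤ (⌊T'⌋ : ℝ) := by
      have : (n : ℤ) ≤ ⌊T'⌋ := Int.le_floor.mpr (by exact_mod_cast hT')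
      exact_mod_cast this
    have hexp : Real.exp (-lam * (⌊T'⌋ : ℝ)) ≤ r ^ n := by
      rw [hrdef, ← Real.exp_nat_mul]
      apply Real.exp_le_exp.mpr
      nlinarith
    have : Real.exp (-lam * (⌊T'⌋ : ℝ)) * τ₀ / (1 - r) ≤ r ^ n * B := by
      rw [hBdef]
      rw [mul_div_assoc]
      exact mul_le_mul_of_nonneg_right hexp (div_nonneg hτnn h1r.le)
    linarith
  refine ⟨n, Nat.cast_nonneg n, fun T T' hT hT' x => ?_⟩
  rcases le_total T' T with h | h
  · exact hmain T T' hT' h x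
  · rw [abs_sub_comm]
    exact hmain T' T hT h x
end

section
/- Let M be a compact topological space, let f be a flow on M, let λ > 0, and let τ : M × [0,∞) → ℝ be continuous and satisfy the λ-cocycle identity. Then there exists a continuous function τ∞ : M → ℝ such that τ(·,T) converges uniformly on M to τ∞ as T → +∞, i.e. sup_{x ∈ M} |τ(x,T) − τ∞(x)| → 0 as T → +∞. -/
/-!
A bound for `|τ|` on the compact set `M × [0, 1]` propagates along the cocycle identity to a
uniform bound `B` on `M × [0, ∞)`. The identity then gives
`|τ(x, T') - τ(x, T)| = e^{-λT} |τ(f_T x, T' - T)| ≤ e^{-λT} B` for `0 ≤ T ≤ T'`, so `T ↦ τ(·, T)`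
is Cauchy in the complete space `C(M, ℝ)`, and its limit is `τ∞`.
-/

open Filter Real Topology

def IsExpCocycle {M : Type*} (φ : ℝ → M → M) (lam : ℝ) (τ : M → ℝ → ℝ) : Prop :=
  ∀ (x : M) (T₁ T₂ : ℝ), 0 ≤ T₁ → 0 ≤ T₂ →
    τ x (T₁ + T₂) = τ x T₁ + exp (-lam * T₁) * τ (φ T₁ x) T₂

namespace IsExpCocycle

variable {M : Type*} {φ : ℝ → M → M} {lam : ℝ} {τ : M → ℝ → ℝ}

/-- Splitting `[0, S]` as `[0, 1] ∪ [1, S]` gives `sup |τ| ≤ C + e^{-λ} sup |τ|`, so the bound on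
`[0, 1]` propagates to all times with the factor `∑ e^{-λ n} = 1 / (1 - e^{-λ})`. -/
theorem abs_le_of_abs_le_on_unit (hτ : IsExpCocycle φ lam τ) (hlam : 0 < lam) {C : ℝ}
    (hC : ∀ y S, S ∈ Set.Icc (0 : ℝ) 1 → |τ y S| ≤ C) (y : M) {S : ℝ} (hS : 0 ≤ S) :
    |τ y S| ≤ C / (1 - exp (-lam)) := by
  have he0 : 0 < exp (-lam) := exp_pos _
  have he1 : 0 < 1 - exp (-lam) := by
    have : exp (-lam) < 1 := exp_lt_one_iff.2 (neg_lt_zero.2 hlam)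
    linarith
  have hC0 : 0 ≤ C := (abs_nonneg _).trans (hC y 0 ⟨le_rfl, zero_le_one⟩)
  have hCB : C ≤ C / (1 - exp (-lam)) := by
    rw [le_div_iff₀ he1]
    nlinarith
  suffices ∀ n : ℕ, ∀ y (S : ℝ), 0 ≤ S → S ≤ n → |τ y S| ≤ C / (1 - exp (-lam)) from
    this ⌈S⌉₊ y S hS (Nat.le_ceil S)
  intro n
  induction n with
  | zero =>
    intro y S h0 h1
    exact (hC y S ⟨h0, by push_cast at h1; linarith⟩).trans hCB
  | succ n ih =>
    intro y S h0 h1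
    rcases le_or_gt S 1 with hS1 | hS1
    · exact (hC y S ⟨h0, hS1⟩).trans hCB
    have hsplit := hτ y 1 (S - 1) zero_le_one (by linarith)
    rw [add_sub_cancel, mul_one] at hsplit
    have hhead := hC y 1 ⟨zero_le_one, le_rfl⟩
    have htail := ih (φ 1 y) (S - 1) (by linarith) (by push_cast at h1; linarith)
    calc |τ y S| ≤ |τ y 1| + exp (-lam) * |τ (φ 1 y) (S - 1)| := by
          rw [hsplit]
          exact (abs_add_le _ _).trans_eq (by rw [abs_mul, abs_of_pos he0])
      _ ≤ C + exp (-lam) * (C / (1 - exp (-lam))) := by gcongr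
      _ = C / (1 - exp (-lam)) := by field_simp; ring

theorem exists_bound [TopologicalSpace M] [CompactSpace M] (hτ : IsExpCocycle φ lam τ)
    (hlam : 0 < lam) (hcont : Continuous fun p : M × ℝ => τ p.1 p.2) :
    ∃ B, 0 ≤ B ∧ ∀ y S, 0 ≤ S → |τ y S| ≤ B := by
  obtain ⟨C, hC⟩ := (isCompact_univ.prod (isCompact_Icc (a := (0 : ℝ)) (b := 1)))
    |>.exists_bound_of_continuousOn hcont.continuousOn
  have hC' : ∀ y S, S ∈ Set.Icc (0 : ℝ) 1 → |τ y S| ≤ max C 0 := fun y S hS =>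
    (hC (y, S) ⟨Set.mem_univ y, hS⟩).trans (le_max_left _ _)
  have he1 : 0 < 1 - exp (-lam) := sub_pos.2 (exp_lt_one_iff.2 (neg_lt_zero.2 hlam))
  exact ⟨max C 0 / (1 - exp (-lam)), by positivity,
    fun y S hS => hτ.abs_le_of_abs_le_on_unit hlam hC' y hS⟩

theorem abs_sub_le (hτ : IsExpCocycle φ lam τ) {B : ℝ} (hB : ∀ y S, 0 ≤ S → |τ y S| ≤ B)
    (x : M) {T T' : ℝ} (hT : 0 ≤ T) (hTT' : T ≤ T') :
    |τ x T' - τ x T| ≤ exp (-lam * T) * B := by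
  have hsplit := hτ x T (T' - T) hT (sub_nonneg.2 hTT')
  rw [add_sub_cancel, ← sub_eq_iff_eq_add'] at hsplit
  rw [hsplit, abs_mul, abs_of_pos (exp_pos _)]
  gcongr
  exact hB _ _ (sub_nonneg.2 hTT')

end IsExpCocycle

theorem cauchySeq_of_dist_le_of_tendsto_zero {X : Type*} [PseudoMetricSpace X] {u : ℝ → X}
    {b : ℝ → ℝ} (hb : Tendsto b atTop (𝓝 0))
    (hu : ∀ T T', 0 ≤ T → T ≤ T' → dist (u T) (u T') ≤ b T) : CauchySeq u := by
  refine Metric.cauchySeq_iff'.2 fun ε hε => ?_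
  obtain ⟨N, hbN, hN⟩ := ((hb.eventually (gt_mem_nhds hε)).and (eventually_ge_atTop 0)).exists
  exact ⟨N, fun T hT => (dist_comm (u T) (u N)).trans_lt ((hu N T hN hT).trans_lt hbN)⟩

theorem tendsto_exp_neg_mul_mul_atTop {lam : ℝ} (hlam : 0 < lam) (B : ℝ) :
    Tendsto (fun T => exp (-lam * T) * B) atTop (𝓝 0) := by
  simpa using (tendsto_exp_atBot.comp
    (tendsto_id.const_mul_atTop_of_neg (neg_neg_of_pos hlam))).mul_const B

/-- existence of a continuous uniform limit `τ∞` of `τ(·,T)` as `T → +∞`. -/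
theorem stmt3 {M : Type*} [TopologicalSpace M] [CompactSpace M]
    (f : Flow ℝ M) (lam : ℝ) (hlam : 0 < lam)
    (τ : M → ℝ → ℝ) (hcont : Continuous fun p : M × ℝ => τ p.1 p.2)
    (hcocycle : ∀ (x : M) (T₁ T₂ : ℝ), 0 ≤ T₁ → 0 ≤ T₂ →
      τ x (T₁ + T₂) = τ x T₁ + Real.exp (-lam * T₁) * τ (f T₁ x) T₂) :
    ∃ tauInf : M → ℝ, Continuous tauInf ∧
      TendstoUniformly (fun T : ℝ => fun x : M => τ x T) tauInf Filter.atTop := by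
  have hτ : IsExpCocycle f lam τ := hcocycle
  obtain ⟨B, hB0, hB⟩ := hτ.exists_bound hlam hcont
  let u : ℝ → C(M, ℝ) := fun T =>
    ⟨fun x => τ x T, hcont.comp (.prodMk continuous_id continuous_const)⟩
  have hu : CauchySeq u :=
    cauchySeq_of_dist_le_of_tendsto_zero (tendsto_exp_neg_mul_mul_atTop hlam B)
      fun T T' hT hTT' => (ContinuousMap.dist_le (by positivity)).2 fun x => by
        rw [Real.dist_eq, abs_sub_comm]
        exact hτ.abs_sub_le hB x hT hTT'
  obtain ⟨tauInf, hlim⟩ := cauchySeq_tendsto_of_complete hu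
  exact ⟨tauInf, tauInf.continuous, ContinuousMap.tendsto_iff_tendstoUniformly.1 hlim⟩
end

section
/- Let M be a compact metric space, let f and g be flows on M, let φ : M → M be continuous, and let λ ∈ ℝ. For T ≥ 0 define φ_T = g_{−λT} ∘ φ ∘ f_T. Assume there is a map ψ : M → M such that φ_T converges uniformly to ψ as T → +∞. Then ψ ∘ f_t = g_{λt} ∘ ψ for all t ∈ ℝ. -/
/-- a uniform limit `ψ` of `φ_T = g_{-λT} ∘ φ ∘ f_T` as `T → +∞`
conjugates the flows: `ψ ∘ f_t = g_{λt} ∘ ψ`. -/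
theorem stmt5 {M : Type*} [MetricSpace M] [CompactSpace M]
    (f g : Flow ℝ M) (φ : M → M) (hφ : Continuous φ) (lam : ℝ) (ψ : M → M)
    (hconv : TendstoUniformly (fun T : ℝ => fun x : M => g (-(lam * T)) (φ (f T x)))
      ψ Filter.atTop) :
    ∀ (t : ℝ) (x : M), ψ (f t x) = g (lam * t) (ψ x) := by
  intro t x
  have h1 : Filter.Tendsto (fun T : ℝ => g (-(lam * T)) (φ (f T (f t x))))
      Filter.atTop (nhds (ψ (f t x))) := hconv.tendsto_at (f t x)
  have h2 : Filter.Tendsto (fun T : ℝ => g (-(lam * (T + t))) (φ (f (T + t) x)))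
      Filter.atTop (nhds (ψ x)) :=
    (hconv.tendsto_at x).comp (Filter.tendsto_atTop_add_const_right _ t Filter.tendsto_id)
  have h3 : Filter.Tendsto (fun T : ℝ => g (lam * t) (g (-(lam * (T + t))) (φ (f (T + t) x))))
      Filter.atTop (nhds (g (lam * t) (ψ x))) :=
    ((g.continuous_toFun (lam * t)).tendsto _).comp h2
  have heq : (fun T : ℝ => g (lam * t) (g (-(lam * (T + t))) (φ (f (T + t) x))))
      = fun T : ℝ => g (-(lam * T)) (φ (f T (f t x))) := by
    funext T
    rw [← Flow.map_add, ← Flow.map_add]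
    ring_nf
  rw [heq] at h3
  exact tendsto_nhds_unique h1 h3
end
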